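/- arXiv:2201.03437 — 9 statements merged into one kernel-verified Lean document; each statement's English description precedes it below -/
import Mathlib

section
/- Let a, b, c, d be four points in ℝ² such that no three of them are collinear. Then the open segments (a,b) and (c,d) have a common point if and only if the orientation determinants of (a,b,c) and (a,b,d) have opposite signs and the orientation determinants of (c,d,a) and (c,d,b) have opposite signs. -/
/-- Orientation determinant of an ordered triple of points in the plane. -/
def odet (x y z : Fin 2 → ℝ) : ℝ :=
  Matrix.det !![1, 1, 1; x 0, y 0, z 0; x 1, y 1, z 1]

lemma odet_eq (x y z : Fin 2 → ℝ) :
    odet x y z = (y 0 - x 0) * (z 1 - x 1) - (y 1 - x 1) * (z 0 - x 0) := by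
  simp [odet, Matrix.det_fin_three]; ring

lemma key1 (s r A B : ℝ) (hs : 0 < s) (hr : 0 < r) (hA : A ≠ 0)
    (E : s * A + r * B = 0) : A * B < 0 := by
  have hA2 : 0 < A * A := mul_self_pos.mpr hA
  have E2 : r * (A * B) = -(s * (A * A)) := by linear_combination A * E
  nlinarith [mul_pos hs hA2]

lemma param_mem (X Y : ℝ) (h : X * Y < 0) : 0 < Y / (Y - X) ∧ Y / (Y - X) < 1 := by
  rcases lt_or_gt_of_ne (fun hX : X = 0 => by simp [hX] at h) with hX | hX
  · have hY : 0 < Y := by nlinarith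
    exact ⟨div_pos hY (by linarith), by rw [div_lt_one (by linarith)]; linarith⟩
  · have hY : Y < 0 := by nlinarith
    refine ⟨div_pos_of_neg_of_neg hY (by linarith), ?_⟩
    rw [div_lt_one_iff]
    exact Or.inr (Or.inr ⟨by linarith, by linarith⟩)

lemma param_ne (X Y : ℝ) (h : X * Y < 0) : Y - X ≠ 0 := by
  intro hh
  rw [sub_eq_zero] at hh
  rw [hh] at h
  nlinarith

lemma cross_key0 (a b c d : Fin 2 → ℝ) :
    (odet a b d * c 0 - odet a b c * d 0) * (odet c d b - odet c d a) =
    (odet c d b * a 0 - odet c d a * b 0) * (odet a b d - odet a b c) := by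
  simp only [odet_eq]; ring

lemma cross_key1 (a b c d : Fin 2 → ℝ) :
    (odet a b d * c 1 - odet a b c * d 1) * (odet c d b - odet c d a) =
    (odet c d b * a 1 - odet c d a * b 1) * (odet a b d - odet a b c) := by
  simp only [odet_eq]; ring

lemma cross_key (a b c d : Fin 2 → ℝ) (i : Fin 2) :
    (odet a b d * c i - odet a b c * d i) * (odet c d b - odet c d a) =
    (odet c d b * a i - odet c d a * b i) * (odet a b d - odet a b c) := by
  match i with
  | 0 => exact cross_key0 a b c d
  | 1 => exact cross_key1 a b c d

theorem openSegment_inter_nonempty_iff_opposite_orientations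
    (a b c d : Fin 2 → ℝ)
    (h1 : odet a b c ≠ 0) (h2 : odet a b d ≠ 0)
    (h3 : odet a c d ≠ 0) (h4 : odet b c d ≠ 0) :
    (openSegment ℝ a b ∩ openSegment ℝ c d).Nonempty ↔
      (odet a b c * odet a b d < 0 ∧ odet c d a * odet c d b < 0) := by
  have hX : odet c d a ≠ 0 := by
    rw [odet_eq]; rw [odet_eq] at h3; intro h; apply h3; linear_combination h
  have hY : odet c d b ≠ 0 := by
    rw [odet_eq]; rw [odet_eq] at h4; intro h; apply h4; linear_combination h
  constructor
  · rintro ⟨p, ⟨t, u, ht, hu, htu, hpt⟩, ⟨s, r, hs, hr, hsr, hps⟩⟩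
    have e0 := congrFun (hpt.trans hps.symm) 0
    have e1 := congrFun (hpt.trans hps.symm) 1
    simp only [Pi.add_apply, Pi.smul_apply, smul_eq_mul] at e0 e1
    have EA : s * odet a b c + r * odet a b d = 0 := by
      rw [odet_eq, odet_eq]
      linear_combination (b 1 - a 1) * e0 - (b 0 - a 0) * e1 +
        ((b 0 - a 0) * a 1 - (b 1 - a 1) * a 0) * (htu - hsr)
    have EX : t * odet c d a + u * odet c d b = 0 := by
      rw [odet_eq, odet_eq]
      linear_combination (-(d 1 - c 1)) * e0 + (d 0 - c 0) * e1 +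
        ((d 0 - c 0) * c 1 - (d 1 - c 1) * c 0) * (hsr - htu)
    exact ⟨key1 s r _ _ hs hr h1 EA, key1 t u _ _ ht hu hX EX⟩
  · rintro ⟨hAB, hXY⟩
    obtain ⟨ht0, ht1⟩ := param_mem _ _ hXY
    obtain ⟨hs0, hs1⟩ := param_mem _ _ hAB
    have hYX := param_ne _ _ hXY
    have hBA := param_ne _ _ hAB
    refine ⟨fun i => (odet c d b / (odet c d b - odet c d a)) * a i +
        (1 - odet c d b / (odet c d b - odet c d a)) * b i,
      ⟨odet c d b / (odet c d b - odet c d a),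
        1 - odet c d b / (odet c d b - odet c d a), ht0, by linarith, by ring, ?_⟩,
      ⟨odet a b d / (odet a b d - odet a b c),
        1 - odet a b d / (odet a b d - odet a b c), hs0, by linarith, by ring, ?_⟩⟩
    · funext i
      simp only [Pi.add_apply, Pi.smul_apply, smul_eq_mul]
    · funext i
      simp only [Pi.add_apply, Pi.smul_apply, smul_eq_mul]
      field_simp
      linear_combination cross_key a b c d i
end

section
/- A finite set S of points in ℝ² with |S| ≥ 4 and no three points collinear is in convex position if and only if every 4-element subset of S is in convex position. -/
/-- A finite planar point set is in general position if no three of its points are collinear. -/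
def GenPos (S : Finset (Fin 2 → ℝ)) : Prop :=
  ∀ p ∈ S, ∀ q ∈ S, ∀ r ∈ S, p ≠ q → p ≠ r → q ≠ r →
    ¬ Collinear ℝ ({p, q, r} : Set (Fin 2 → ℝ))

theorem convexPosition_iff_four_point_subsets (S : Finset (Fin 2 → ℝ))
    (hcard : 4 ≤ S.card) (hgp : GenPos S) :
    (∀ p ∈ S, p ∉ convexHull ℝ ((↑S : Set (Fin 2 → ℝ)) \ {p})) ↔
      (∀ T ⊆ S, T.card = 4 →
        ∀ p ∈ T, p ∉ convexHull ℝ ((↑T : Set (Fin 2 → ℝ)) \ {p})) := by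
  constructor
  · intro h T hTS _ p hpT hp
    exact h p (hTS hpT)
      (convexHull_mono (Set.diff_subset_diff_left (by exact_mod_cast hTS)) hp)
  · intro h p hpS hp
    rw [convexHull_eq_union] at hp
    simp only [Set.mem_iUnion, exists_prop] at hp
    obtain ⟨t, hts, hai, hpt⟩ := hp
    have htcard : t.card ≤ 3 := by
      have := hai.card_le_finrank_succ
      rw [Fintype.card_coe] at this
      have h2 : Module.finrank ℝ (vectorSpan ℝ (Set.range ((↑) : t → (Fin 2 → ℝ)))) ≤ 2 := by
        have := Submodule.finrank_le (vectorSpan ℝ (Set.range ((↑) : t → (Fin 2 → ℝ))))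
        simpa using this
      omega
    have htp : (↑t : Set (Fin 2 → ℝ)) ⊆ (↑S : Set (Fin 2 → ℝ)) \ {p} := hts
    have hpnott : p ∉ t := fun hc => (htp hc).2 rfl
    have htS : ∀ x ∈ t, x ∈ S := fun x hx => ((htp hx).1 : x ∈ (S : Set _))
    interval_cases hc : t.card
    · simp [Finset.card_eq_zero.mp hc] at hpt
    · obtain ⟨a, ha⟩ := Finset.card_eq_one.mp hc
      subst ha
      simp at hpt
      exact hpnott (by simp [hpt])
    · obtain ⟨a, b, hab, hab2⟩ := Finset.card_eq_two.mp hc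
      subst hab2
      have hcol : Collinear ℝ ({p, a, b} : Set (Fin 2 → ℝ)) := by
        apply collinear_insert_of_mem_affineSpan_pair
        apply convexHull_subset_affineSpan
        simpa using hpt
      have hpa : p ≠ a := fun h => hpnott (by simp [h])
      have hpb : p ≠ b := fun h => hpnott (by simp [h])
      exact hgp p hpS a (htS a (by simp)) b (htS b (by simp)) hpa hpb hab hcol
    · have hT4 : (insert p t).card = 4 := by
        rw [Finset.card_insert_of_notMem hpnott, hc]
      have hTS : insert p t ⊆ S := by
        intro x hx
        rcases Finset.mem_insert.mp hx with h1 | h1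
        · exact h1 ▸ hpS
        · exact htS x h1
      apply h (insert p t) hTS hT4 p (Finset.mem_insert_self p t)
      refine convexHull_mono ?_ hpt
      intro x hx
      exact ⟨by simp [Finset.mem_coe.mp hx], fun hxp => hpnott (hxp ▸ hx)⟩
end

section
/- Let A₊ and A₋ be disjoint finite subsets of ℝ² with |A₊| = 2, such that the points of A₊ ∪ A₋ are in general position (no three collinear), and such that for every affine line L in ℝ² with open half-planes L⁺ and L⁻, the quantity |A₊ ∩ L⁺| + |A₋ ∩ L⁻| is at least 2. Then every point of A₊ lies in the interior of the convex hull of A₋. -/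
open scoped RealInnerProductSpace

private lemma separation_aux (s : Finset (EuclideanSpace ℝ (Fin 2)))
    (p : EuclideanSpace ℝ (Fin 2))
    (hp : p ∉ interior (convexHull ℝ (↑s : Set (EuclideanSpace ℝ (Fin 2))))) :
    ∃ a : EuclideanSpace ℝ (Fin 2), a ≠ 0 ∧ ∀ x ∈ s, ⟪a, x⟫ ≤ ⟪a, p⟫ := by
  set C : Set (EuclideanSpace ℝ (Fin 2)) := convexHull ℝ (↑s : Set (EuclideanSpace ℝ (Fin 2))) with hC
  by_cases hne : (interior C).Nonempty
  · obtain ⟨x₀, hx₀⟩ := hne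
    obtain ⟨f, hf⟩ := geometric_hahn_banach_open_point
      ((convex_convexHull ℝ _).interior) isOpen_interior hp
    rw [← hC] at hf
    have hfne : f ≠ 0 := by
      intro h0
      have := hf x₀ hx₀
      rw [h0] at this
      simp at this
    set a : EuclideanSpace ℝ (Fin 2) := (InnerProductSpace.toDual ℝ (EuclideanSpace ℝ (Fin 2))).symm f with ha
    have hax : ∀ x : EuclideanSpace ℝ (Fin 2), ⟪a, x⟫ = f x := fun x => InnerProductSpace.toDual_symm_apply
    refine ⟨a, ?_, ?_⟩
    · intro h0
      apply hfne
      have : (InnerProductSpace.toDual ℝ (EuclideanSpace ℝ (Fin 2))).symm f = (InnerProductSpace.toDual ℝ (EuclideanSpace ℝ (Fin 2))).symm 0 := by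
        rw [← ha, h0]; simp
      exact (InnerProductSpace.toDual ℝ (EuclideanSpace ℝ (Fin 2))).symm.injective this
    · intro x hx
      rw [hax, hax]
      by_contra hlt
      push_neg at hlt
      have hxC : x ∈ C := subset_convexHull ℝ _ hx
      set D : ℝ := f x - f p with hD
      set M : ℝ := f x - f x₀ with hM
      have hDpos : 0 < D := by simp [hD]; linarith
      set t : ℝ := min 1 (D / (2 * (|M| + 1))) with ht
      have habs : (0:ℝ) < |M| + 1 := by positivity
      have htpos : 0 < t := lt_min one_pos (by positivity)
      have htle : t ≤ 1 := min_le_left _ _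
      have hz : t • x₀ + (1 - t) • x ∈ interior C :=
        (convex_convexHull ℝ _).combo_interior_self_mem_interior hx₀ hxC htpos
          (by linarith) (by ring)
      have hfz := hf _ hz
      rw [map_add, map_smul, map_smul] at hfz
      have htM : t * M < D := by
        have h1 : t ≤ D / (2 * (|M| + 1)) := min_le_right _ _
        have h2 : t * M ≤ t * |M| := by
          have := le_abs_self M
          nlinarith
        have h3 : t * |M| ≤ D / (2 * (|M| + 1)) * |M| := by
          have := abs_nonneg M
          nlinarith
        have h4 : D / (2 * (|M| + 1)) * |M| < D := by
          rw [div_mul_eq_mul_div, div_lt_iff₀ (by positivity)]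
          nlinarith [abs_nonneg M]
        linarith
      have : t • (f x₀) + (1 - t) • (f x) = f x - t * M := by
        simp only [smul_eq_mul, hM]; ring
      rw [this] at hfz
      simp only [hD] at htM
      linarith
  · rw [hC, interior_convexHull_nonempty_iff_affineSpan_eq_top] at hne
    rcases s.eq_empty_or_nonempty with rfl | ⟨x₀, hx₀⟩
    · obtain ⟨a, ha⟩ := exists_ne (0 : EuclideanSpace ℝ (Fin 2))
      exact ⟨a, ha, by simp⟩
    · have hsn : ((↑s : Set (EuclideanSpace ℝ (Fin 2)))).Nonempty := ⟨x₀, hx₀⟩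
      have hdir : (affineSpan ℝ (↑s : Set (EuclideanSpace ℝ (Fin 2)))).direction ≠ ⊤ := by
        intro h
        exact hne ((AffineSubspace.direction_eq_top_iff_of_nonempty
          (hsn.mono (subset_affineSpan ℝ _))).mp h)
      set V := (affineSpan ℝ (↑s : Set (EuclideanSpace ℝ (Fin 2)))).direction with hV
      have horth : Vᗮ ≠ ⊥ := by
        intro h
        exact hdir (Submodule.orthogonal_eq_bot_iff.mp h)
      obtain ⟨a, haV, ha0⟩ := Submodule.exists_mem_ne_zero_of_ne_bot horth
      have hconst : ∀ x ∈ s, ⟪a, x⟫ = ⟪a, x₀⟫ := by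
        intro x hx
        have hv : x - x₀ ∈ V :=
          AffineSubspace.vsub_mem_direction (mem_affineSpan ℝ hx) (mem_affineSpan ℝ hx₀)
        have := (Submodule.mem_orthogonal V a).mp haV _ hv
        have h2 : ⟪a, x - x₀⟫ = 0 := by rwa [real_inner_comm]
        rw [inner_sub_right] at h2
        linarith
      rcases le_total ⟪a, x₀⟫ ⟪a, p⟫ with hle | hle
      · exact ⟨a, ha0, fun x hx => by rw [hconst x hx]; exact hle⟩
      · refine ⟨-a, neg_ne_zero.mpr ha0, fun x hx => ?_⟩
        rw [inner_neg_left, inner_neg_left, hconst x hx]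
        linarith

theorem positive_points_in_interior_of_convexHull
    (Aplus Aminus : Finset (EuclideanSpace ℝ (Fin 2)))
    (hdisj : Disjoint Aplus Aminus)
    (hcard : Aplus.card = 2)
    (hgp : ∀ p ∈ (↑Aplus ∪ ↑Aminus : Set (EuclideanSpace ℝ (Fin 2))),
      ∀ q ∈ (↑Aplus ∪ ↑Aminus : Set (EuclideanSpace ℝ (Fin 2))),
      ∀ r ∈ (↑Aplus ∪ ↑Aminus : Set (EuclideanSpace ℝ (Fin 2))),
      p ≠ q → p ≠ r → q ≠ r →
      ¬ Collinear ℝ ({p, q, r} : Set (EuclideanSpace ℝ (Fin 2))))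
    (hhalf : ∀ a : EuclideanSpace ℝ (Fin 2), a ≠ 0 → ∀ c : ℝ,
      2 ≤ {x ∈ (↑Aplus : Set (EuclideanSpace ℝ (Fin 2))) | c < ⟪a, x⟫}.ncard
          + {x ∈ (↑Aminus : Set (EuclideanSpace ℝ (Fin 2))) | ⟪a, x⟫ < c}.ncard) :
    ∀ p ∈ Aplus,
      p ∈ interior (convexHull ℝ (↑Aminus : Set (EuclideanSpace ℝ (Fin 2)))) := by
  classical
  intro p hp
  by_contra hnot
  obtain ⟨a, ha0, hsep⟩ := separation_aux Aminus p hnot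
  have hb0 : (-a : EuclideanSpace ℝ (Fin 2)) ≠ 0 := neg_ne_zero.mpr ha0
  have key := hhalf (-a) hb0 ⟪-a, p⟫
  have hminus : {x ∈ (↑Aminus : Set (EuclideanSpace ℝ (Fin 2))) | ⟪-a, x⟫ < ⟪-a, p⟫} = ∅ := by
    ext x
    simp only [Set.mem_setOf_eq, Set.mem_empty_iff_false, iff_false, not_and]
    intro hx
    rw [inner_neg_left, inner_neg_left, not_lt, neg_le_neg_iff]
    exact hsep x hx
  have hplus : {x ∈ (↑Aplus : Set (EuclideanSpace ℝ (Fin 2))) | ⟪-a, p⟫ < ⟪-a, x⟫}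
      ⊆ (↑(Aplus.erase p) : Set (EuclideanSpace ℝ (Fin 2))) := by
    intro x hx
    obtain ⟨hxA, hxlt⟩ := hx
    simp only [Finset.coe_erase, Set.mem_diff, Set.mem_singleton_iff]
    refine ⟨hxA, ?_⟩
    rintro rfl
    exact lt_irrefl _ hxlt
  have hle : {x ∈ (↑Aplus : Set (EuclideanSpace ℝ (Fin 2))) | ⟪-a, p⟫ < ⟪-a, x⟫}.ncard ≤ 1 := by
    calc {x ∈ (↑Aplus : Set (EuclideanSpace ℝ (Fin 2))) | ⟪-a, p⟫ < ⟪-a, x⟫}.ncard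
        ≤ (↑(Aplus.erase p) : Set (EuclideanSpace ℝ (Fin 2))).ncard :=
          Set.ncard_le_ncard hplus (Aplus.erase p).finite_toSet
      _ = (Aplus.erase p).card := Set.ncard_coe_finset _
      _ = 1 := by rw [Finset.card_erase_of_mem hp, hcard]
  rw [hminus] at key
  simp only [Set.ncard_empty, add_zero] at key
  omega
end

section
/- Let M be a real symmetric n×n matrix indexed by a set I = I₁ ∪ I₂ with I₁ ∩ I₂ = {v}, such that M[i,j] = 0 whenever i ∈ I₁ \ {v} and j ∈ I₂ \ {v}, and M[v,v] = 1. Suppose the principal submatrices M[I₁\{v}], M[I₂\{v}] are nonsingular. Then det(M) / det(M[I\{v}]) = det(M[I₁]) / det(M[I₁\{v}]) + det(M[I₂]) / det(M[I₂\{v}]) − 1. -/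
/-!
Expanding the determinant of `M[J]` along the Schur complement of `M[J \ {v}]` gives
`det M[J] / det M[J \ {v}] = M v v - c (M[J \ {v}])⁻¹ b` with `b = M[J \ {v}, v]`, `c = M[v, J \ {v}]`.
For `J = I` the matrix `M[I \ {v}]` is block diagonal with blocks `M[I₁ \ {v}]`, `M[I₂ \ {v}]`, and
so is its inverse; hence the correction term for `I` is the sum of those for `I₁` and `I₂`, and
`M v v = 1` turns this into the formula.
-/

/-- Principal submatrix of `M` on the index set `J`. -/
def pminor {I : Type*} [DecidableEq I] (M : Matrix I I ℝ) (J : Finset I) :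
    Matrix J J ℝ :=
  M.submatrix (fun i => (i : I)) (fun i => (i : I))

open Matrix

section

variable {ι : Type*}

theorem submatrix_coe_eq_zero {M : Matrix ι ι ℝ} {K L : Finset ι}
    (h : ∀ i ∈ K, ∀ j ∈ L, M i j = 0) : M.submatrix ((↑) : K → ι) ((↑) : L → ι) = 0 := by
  ext i j
  exact h _ i.2 _ j.2

variable [DecidableEq ι] (M : Matrix ι ι ℝ)

noncomputable def pminorInvForm (K : Finset ι) (x y : ι → ℝ) : ℝ :=
  (fun i : K => x i) ⬝ᵥ (pminor M K)⁻¹ *ᵥ fun i : K => y i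

theorem det_pminor_univ [Fintype ι] : (pminor M Finset.univ).det = M.det :=
  det_submatrix_equiv_self (Equiv.subtypeUnivEquiv Finset.mem_univ) M

section Union

variable {M} {K L : Finset ι}

theorem pminor_union_submatrix (hKL : Disjoint K L) :
    (pminor M (K ∪ L)).submatrix (Equiv.Finset.union K L hKL) (Equiv.Finset.union K L hKL) =
      fromBlocks (pminor M K) (M.submatrix (↑) (↑)) (M.submatrix (↑) (↑)) (pminor M L) := by
  ext (i | i) (j | j) <;> rfl

theorem det_pminor_union_eq_mul_det_schur (hKL : Disjoint K L) (hK : (pminor M K).det ≠ 0) :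
    (pminor M (K ∪ L)).det = (pminor M K).det *
      (pminor M L - M.submatrix ((↑) : L → ι) ((↑) : K → ι) * (pminor M K)⁻¹ *
        M.submatrix ((↑) : K → ι) ((↑) : L → ι)).det := by
  let := invertibleOfIsUnitDet (pminor M K) (isUnit_iff_ne_zero.2 hK)
  rw [← det_submatrix_equiv_self (Equiv.Finset.union K L hKL), pminor_union_submatrix,
    det_fromBlocks₁₁, invOf_eq_nonsing_inv]

theorem det_pminor_union (hKL : Disjoint K L) (hzero : ∀ i ∈ K, ∀ j ∈ L, M i j = 0) :
    (pminor M (K ∪ L)).det = (pminor M K).det * (pminor M L).det := by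
  rw [← det_submatrix_equiv_self (Equiv.Finset.union K L hKL), pminor_union_submatrix,
    submatrix_coe_eq_zero hzero, det_fromBlocks_zero₁₂]

theorem pminorInvForm_union (hKL : Disjoint K L)
    (hKL0 : ∀ i ∈ K, ∀ j ∈ L, M i j = 0) (hLK0 : ∀ i ∈ L, ∀ j ∈ K, M i j = 0)
    (hK : (pminor M K).det ≠ 0) (hL : (pminor M L).det ≠ 0) (x y : ι → ℝ) :
    pminorInvForm M (K ∪ L) x y = pminorInvForm M K x y + pminorInvForm M L x y := by
  set e := Equiv.Finset.union K L hKL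
  have hblocks : pminor M (K ∪ L) =
      (fromBlocks (pminor M K) 0 0 (pminor M L)).submatrix e.symm e.symm := by
    rw [← submatrix_coe_eq_zero hKL0, ← submatrix_coe_eq_zero hLK0, ← pminor_union_submatrix hKL,
      submatrix_submatrix]
    simp only [e, Equiv.self_comp_symm, submatrix_id_id]
  have hinv : (fromBlocks (pminor M K) 0 0 (pminor M L))⁻¹ =
      fromBlocks (pminor M K)⁻¹ 0 0 (pminor M L)⁻¹ := by
    rw [inv_fromBlocks_zero₁₂_of_isUnit_iff _ _ _ (iff_of_true
      ((isUnit_iff_isUnit_det _).2 (isUnit_iff_ne_zero.2 hK))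
      ((isUnit_iff_isUnit_det _).2 (isUnit_iff_ne_zero.2 hL)))]
    simp
  have hcomp (z : ι → ℝ) :
      (fun i : ↥(K ∪ L) => z i) ∘ e = Sum.elim (fun i : K => z i) (fun i : L => z i) := by
    ext (i | i) <;> rfl
  unfold pminorInvForm
  rw [hblocks, inv_submatrix_equiv, submatrix_mulVec_equiv, dotProduct_comp_equiv_symm,
    Equiv.symm_symm, hcomp, hcomp, hinv, fromBlocks_mulVec, sumElim_dotProduct_sumElim]
  simp only [zero_mulVec, add_zero, zero_add]
  rfl

end Union

theorem det_pminor_div_det_pminor_erase {J : Finset ι} {v : ι} (hv : v ∈ J)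
    (h : (pminor M (J.erase v)).det ≠ 0) :
    (pminor M J).det / (pminor M (J.erase v)).det =
      M v v - pminorInvForm M (J.erase v) (M v) (fun i => M i v) := by
  have hJ : J.erase v ∪ {v} = J := by
    rw [Finset.union_comm, ← Finset.insert_eq, Finset.insert_erase hv]
  rw [div_eq_iff h]
  conv_lhs => rw [← hJ]
  rw [det_pminor_union_eq_mul_det_schur
      (Finset.disjoint_singleton_right.2 (Finset.notMem_erase v J)) h,
    det_unique (n := ({v} : Finset ι)), mul_comm, Matrix.mul_assoc]
  rfl

end

theorem local_determinant_common_vertex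
    {I : Type*} [Fintype I] [DecidableEq I] (M : Matrix I I ℝ)
    (I₁ I₂ : Finset I) (v : I)
    (hsym : M.IsSymm)
    (hunion : I₁ ∪ I₂ = Finset.univ)
    (hinter : I₁ ∩ I₂ = {v})
    (hzero : ∀ i ∈ I₁, i ≠ v → ∀ j ∈ I₂, j ≠ v → M i j = 0)
    (hvv : M v v = 1)
    (h1 : (pminor M (I₁.erase v)).det ≠ 0)
    (h2 : (pminor M (I₂.erase v)).det ≠ 0) :
    M.det / (pminor M (Finset.univ.erase v)).det =
      (pminor M I₁).det / (pminor M (I₁.erase v)).det +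
        (pminor M I₂).det / (pminor M (I₂.erase v)).det - 1 := by
  have hv : v ∈ I₁ ∩ I₂ := hinter ▸ Finset.mem_singleton_self v
  have hsplit : Finset.univ.erase v = I₁.erase v ∪ I₂.erase v := by
    rw [← Finset.erase_union_distrib, hunion]
  have hdisj : Disjoint (I₁.erase v) (I₂.erase v) := by
    rw [Finset.disjoint_iff_inter_eq_empty, Finset.erase_inter, Finset.inter_erase, hinter]
    simp
  have h₁₂ : ∀ i ∈ I₁.erase v, ∀ j ∈ I₂.erase v, M i j = 0 := fun i hi j hj =>
    hzero i (Finset.mem_of_mem_erase hi) (Finset.ne_of_mem_erase hi) j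
      (Finset.mem_of_mem_erase hj) (Finset.ne_of_mem_erase hj)
  have h₂₁ : ∀ i ∈ I₂.erase v, ∀ j ∈ I₁.erase v, M i j = 0 := fun i hi j hj =>
    (hsym.apply j i).trans (h₁₂ j hj i hi)
  have h : (pminor M (Finset.univ.erase v)).det ≠ 0 := by
    rw [hsplit, det_pminor_union hdisj h₁₂]
    exact mul_ne_zero h1 h2
  rw [← det_pminor_univ, det_pminor_div_det_pminor_erase M (Finset.mem_univ v) h,
    det_pminor_div_det_pminor_erase M (Finset.mem_of_mem_inter_left hv) h1,
    det_pminor_div_det_pminor_erase M (Finset.mem_of_mem_inter_right hv) h2, hsplit,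
    pminorInvForm_union hdisj h₁₂ h₂₁ h1 h2, hvv]
  ring
end

section
/- Let M be a real symmetric matrix indexed by the disjoint union I = I₁ ⊔ I₂, with v₁ ∈ I₁ and v₂ ∈ I₂, such that M[i,j] = 0 for all i ∈ I₁, j ∈ I₂ except M[v₁,v₂] = M[v₂,v₁] = −a for some real a. Suppose M[I₁\{v₁}] and M[I₂\{v₂}] are nonsingular. Then det(M) / det(M[I \ {v₁,v₂}]) = (det(M[I₁]) / det(M[I₁\{v₁}])) · (det(M[I₂]) / det(M[I₂\{v₂}])) − a². -/
lemma submatrix_elim {I m₁ m₂ n₁ n₂ : Type*} (M : Matrix I I ℝ)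
    (f₁ : m₁ → I) (f₂ : m₂ → I) (g₁ : n₁ → I) (g₂ : n₂ → I) :
    M.submatrix (Sum.elim f₁ f₂) (Sum.elim g₁ g₂) =
      Matrix.fromBlocks (M.submatrix f₁ g₁) (M.submatrix f₁ g₂)
        (M.submatrix f₂ g₁) (M.submatrix f₂ g₂) := by
  ext i j
  cases i <;> cases j <;> rfl

lemma fromBlocks_sub' {l m n o α : Type*} [Sub α]
    (A A' : Matrix n l α) (B B' : Matrix n m α) (C C' : Matrix o l α) (D D' : Matrix o m α) :
    Matrix.fromBlocks A B C D - Matrix.fromBlocks A' B' C' D' =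
      Matrix.fromBlocks (A - A') (B - B') (C - C') (D - D') := by
  ext i j
  cases i <;> cases j <;> rfl

lemma det_fromBlocks_one_one (P Q R S : Matrix (Fin 1) (Fin 1) ℝ) :
    (Matrix.fromBlocks P Q R S).det = P 0 0 * S 0 0 - Q 0 0 * R 0 0 := by
  rw [← Matrix.det_submatrix_equiv_self finSumFinEquiv.symm]
  have h : (Matrix.fromBlocks P Q R S).submatrix finSumFinEquiv.symm finSumFinEquiv.symm
      = !![P 0 0, Q 0 0; R 0 0, S 0 0] := by
    ext i j
    fin_cases i <;> fin_cases j <;> rfl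
  rw [h, Matrix.det_fin_two_of]

lemma pminor_erase_det {I : Type*} [Fintype I] [DecidableEq I] (M : Matrix I I ℝ)
    (K : Finset I) (v : I) (hv : v ∈ K)
    [Invertible (pminor M (K.erase v))] :
    (pminor M K).det = (pminor M (K.erase v)).det *
      (M v v - (M.submatrix (fun _ : Fin 1 => v) (fun j : ↥(K.erase v) => (j : I)) *
        ⅟(pminor M (K.erase v)) *
        M.submatrix (fun j : ↥(K.erase v) => (j : I)) (fun _ : Fin 1 => v)) 0 0) := by
  classical
  set f : ↥(K.erase v) ⊕ Fin 1 → ↥K :=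
    Sum.elim (fun j => ⟨(j : I), (Finset.mem_erase.mp j.2).2⟩) (fun _ => ⟨v, hv⟩) with hf
  have hbij : Function.Bijective f := by
    rw [Fintype.bijective_iff_surjective_and_card]
    constructor
    · rintro ⟨i, hi⟩
      by_cases h : i = v
      · exact ⟨Sum.inr 0, Subtype.ext h.symm⟩
      · exact ⟨Sum.inl ⟨i, Finset.mem_erase.mpr ⟨h, hi⟩⟩, rfl⟩
    · have hp : 0 < K.card := Finset.card_pos.mpr ⟨v, hv⟩
      simp only [Fintype.card_sum, Fintype.card_coe, Finset.card_erase_of_mem hv,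
        Fintype.card_fin]
      omega
  let e : (↥(K.erase v) ⊕ Fin 1) ≃ ↥K := Equiv.ofBijective f hbij
  rw [← Matrix.det_submatrix_equiv_self e]
  have h1 : (pminor M K).submatrix e e =
      M.submatrix (Sum.elim (fun j : ↥(K.erase v) => (j : I)) (fun _ : Fin 1 => v))
        (Sum.elim (fun j : ↥(K.erase v) => (j : I)) (fun _ : Fin 1 => v)) := by
    ext i j
    cases i <;> cases j <;> rfl
  rw [h1, submatrix_elim]
  have h2 : M.submatrix (fun j : ↥(K.erase v) => (j : I)) (fun j : ↥(K.erase v) => (j : I)) =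
      pminor M (K.erase v) := rfl
  rw [h2, Matrix.det_fromBlocks₁₁, Matrix.det_fin_one, Matrix.sub_apply]
  rfl

theorem local_determinant_single_edge
    {I : Type*} [Fintype I] [DecidableEq I] (M : Matrix I I ℝ)
    (I₁ I₂ : Finset I) (v₁ v₂ : I) (a : ℝ)
    (hsym : M.IsSymm)
    (hunion : I₁ ∪ I₂ = Finset.univ)
    (hdisj : Disjoint I₁ I₂)
    (hv₁ : v₁ ∈ I₁) (hv₂ : v₂ ∈ I₂)
    (hzero : ∀ i ∈ I₁, ∀ j ∈ I₂, ¬(i = v₁ ∧ j = v₂) → M i j = 0)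
    (hedge : M v₁ v₂ = -a)
    (h1 : (pminor M (I₁.erase v₁)).det ≠ 0)
    (h2 : (pminor M (I₂.erase v₂)).det ≠ 0) :
    M.det / (pminor M ((Finset.univ.erase v₁).erase v₂)).det =
      ((pminor M I₁).det / (pminor M (I₁.erase v₁)).det) *
        ((pminor M I₂).det / (pminor M (I₂.erase v₂)).det) - a ^ 2 := by
  classical
  have hne₁₂ : ∀ x ∈ I₁, ∀ y ∈ I₂, x ≠ y := fun x hx y hy h =>
    Finset.disjoint_left.mp hdisj hx (h ▸ hy)
  have hv12 : v₁ ≠ v₂ := hne₁₂ v₁ hv₁ v₂ hv₂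
  have hsy : ∀ i j, M i j = M j i := fun i j => hsym.apply j i
  have hm₁ : ∀ j : ↥(I₁.erase v₁), (j : I) ∈ I₁ ∧ (j : I) ≠ v₁ := fun j =>
    ⟨(Finset.mem_erase.mp j.2).2, (Finset.mem_erase.mp j.2).1⟩
  have hm₂ : ∀ j : ↥(I₂.erase v₂), (j : I) ∈ I₂ ∧ (j : I) ≠ v₂ := fun j =>
    ⟨(Finset.mem_erase.mp j.2).2, (Finset.mem_erase.mp j.2).1⟩
  set c₁ : ↥(I₁.erase v₁) → I := fun j => (j : I) with hc₁
  set c₂ : ↥(I₂.erase v₂) → I := fun j => (j : I) with hc₂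
  set A := pminor M (I₁.erase v₁) with hA
  set D := pminor M (I₂.erase v₂) with hD
  haveI iA : Invertible A := A.invertibleOfIsUnitDet (isUnit_iff_ne_zero.mpr h1)
  haveI iD : Invertible D := D.invertibleOfIsUnitDet (isUnit_iff_ne_zero.mpr h2)
  set b₁ : Matrix ↥(I₁.erase v₁) (Fin 1) ℝ := M.submatrix c₁ (fun _ => v₁) with hb₁
  set r₁ : Matrix (Fin 1) ↥(I₁.erase v₁) ℝ := M.submatrix (fun _ => v₁) c₁ with hr₁
  set b₂ : Matrix ↥(I₂.erase v₂) (Fin 1) ℝ := M.submatrix c₂ (fun _ => v₂) with hb₂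
  set r₂ : Matrix (Fin 1) ↥(I₂.erase v₂) ℝ := M.submatrix (fun _ => v₂) c₂ with hr₂
  set s₁ : ℝ := (r₁ * ⅟A * b₁) 0 0 with hs₁
  set s₂ : ℝ := (r₂ * ⅟D * b₂) 0 0 with hs₂
  have eq1 : (pminor M I₁).det = A.det * (M v₁ v₁ - s₁) := pminor_erase_det M I₁ v₁ hv₁
  have eq2 : (pminor M I₂).det = D.det * (M v₂ v₂ - s₂) := pminor_erase_det M I₂ v₂ hv₂
  -- zero off-diagonal blocks
  have hz12 : M.submatrix c₁ c₂ = 0 := by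
    ext i j; exact hzero _ (hm₁ i).1 _ (hm₂ j).1 (fun h => (hm₁ i).2 h.1)
  have hz21 : M.submatrix c₂ c₁ = 0 := by
    ext i j
    show M (c₂ i) (c₁ j) = 0
    rw [hsy]
    exact hzero _ (hm₁ j).1 _ (hm₂ i).1 (fun h => (hm₁ j).2 h.1)
  have hzb : M.submatrix c₁ (fun _ : Fin 1 => v₂) = 0 := by
    ext i j; exact hzero _ (hm₁ i).1 _ hv₂ (fun h => (hm₁ i).2 h.1)
  have hzb' : M.submatrix c₂ (fun _ : Fin 1 => v₁) = 0 := by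
    ext i j
    show M (c₂ i) v₁ = 0
    rw [hsy]
    exact hzero _ hv₁ _ (hm₂ i).1 (fun h => (hm₂ i).2 h.2)
  have hzr : M.submatrix (fun _ : Fin 1 => v₁) c₂ = 0 := by
    ext i j; exact hzero _ hv₁ _ (hm₂ j).1 (fun h => (hm₂ j).2 h.2)
  have hzr' : M.submatrix (fun _ : Fin 1 => v₂) c₁ = 0 := by
    ext i j
    show M v₂ (c₁ j) = 0
    rw [hsy]
    exact hzero _ (hm₁ j).1 _ hv₂ (fun h => (hm₁ j).2 h.1)
  -- determinant of the doubly-erased principal minor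
  have eq3 : (pminor M ((Finset.univ.erase v₁).erase v₂)).det = A.det * D.det := by
    set g₀ : ↥(I₁.erase v₁) ⊕ ↥(I₂.erase v₂) → ↥((Finset.univ.erase v₁).erase v₂) :=
      Sum.elim
        (fun j => ⟨(j : I), Finset.mem_erase.mpr ⟨hne₁₂ _ (hm₁ j).1 _ hv₂,
          Finset.mem_erase.mpr ⟨(hm₁ j).2, Finset.mem_univ _⟩⟩⟩)
        (fun j => ⟨(j : I), Finset.mem_erase.mpr ⟨(hm₂ j).2,
          Finset.mem_erase.mpr ⟨fun h => hne₁₂ _ hv₁ _ (hm₂ j).1 h.symm, Finset.mem_univ _⟩⟩⟩)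
      with hg₀
    have hbij : Function.Bijective g₀ := by
      rw [Fintype.bijective_iff_surjective_and_card]
      refine ⟨?_, ?_⟩
      swap
      · have hp₁ : 0 < I₁.card := Finset.card_pos.mpr ⟨v₁, hv₁⟩
        have hp₂ : 0 < I₂.card := Finset.card_pos.mpr ⟨v₂, hv₂⟩
        have hcu : I₁.card + I₂.card = Fintype.card I := by
          rw [← Finset.card_union_of_disjoint hdisj, hunion, Finset.card_univ]
        have hv₂' : v₂ ∈ Finset.univ.erase v₁ :=
          Finset.mem_erase.mpr ⟨hv12.symm, Finset.mem_univ _⟩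
        have h2le : 2 ≤ Fintype.card I := by omega
        simp only [Fintype.card_sum, Fintype.card_coe, Finset.card_erase_of_mem hv₁,
          Finset.card_erase_of_mem hv₂, Finset.card_erase_of_mem hv₂',
          Finset.card_erase_of_mem (Finset.mem_univ v₁), Finset.card_univ]
        omega
      · rintro ⟨i, hi⟩
        obtain ⟨hiv₂, hi'⟩ := Finset.mem_erase.mp hi
        obtain ⟨hiv₁, -⟩ := Finset.mem_erase.mp hi'
        have : i ∈ I₁ ∪ I₂ := hunion.symm ▸ Finset.mem_univ i
        rcases Finset.mem_union.mp this with h | h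
        · exact ⟨Sum.inl ⟨i, Finset.mem_erase.mpr ⟨hiv₁, h⟩⟩, rfl⟩
        · exact ⟨Sum.inr ⟨i, Finset.mem_erase.mpr ⟨hiv₂, h⟩⟩, rfl⟩
    rw [← Matrix.det_submatrix_equiv_self (Equiv.ofBijective g₀ hbij)]
    have hsub : (pminor M ((Finset.univ.erase v₁).erase v₂)).submatrix
        (Equiv.ofBijective g₀ hbij) (Equiv.ofBijective g₀ hbij) =
        M.submatrix (Sum.elim c₁ c₂) (Sum.elim c₁ c₂) := by
      ext i j; cases i <;> cases j <;> rfl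
    rw [hsub, submatrix_elim, hz12, hz21]
    exact Matrix.det_fromBlocks_zero₂₁ _ _ _
  -- determinant of M itself
  set K := Matrix.fromBlocks A (0 : Matrix _ ↥(I₂.erase v₂) ℝ) 0 D with hK
  have hKmul : K * Matrix.fromBlocks (⅟A) 0 0 (⅟D) = 1 := by
    rw [hK, Matrix.fromBlocks_multiply]
    simp only [Matrix.mul_zero, Matrix.zero_mul, add_zero, zero_add,
      invOf_mul_self, mul_invOf_self]
    exact Matrix.fromBlocks_one
  haveI iK : Invertible K := invertibleOfRightInverse _ _ hKmul
  have hinvK : ⅟K = Matrix.fromBlocks (⅟A) 0 0 (⅟D) := invOf_eq_right_inv hKmul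
  have eq4 : M.det = (A.det * D.det) *
      ((M v₁ v₁ - s₁) * (M v₂ v₂ - s₂) - (-a) * (-a)) := by
    set f : (↥(I₁.erase v₁) ⊕ ↥(I₂.erase v₂)) ⊕ (Fin 1 ⊕ Fin 1) → I :=
      Sum.elim (Sum.elim c₁ c₂) (Sum.elim (fun _ => v₁) (fun _ => v₂)) with hfdef
    have hsurj : Function.Surjective f := by
      intro i
      have : i ∈ I₁ ∪ I₂ := hunion.symm ▸ Finset.mem_univ i
      rcases Finset.mem_union.mp this with h | h
      · by_cases hiv : i = v₁
        · exact ⟨Sum.inr (Sum.inl 0), hiv.symm⟩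
        · exact ⟨Sum.inl (Sum.inl ⟨i, Finset.mem_erase.mpr ⟨hiv, h⟩⟩), rfl⟩
      · by_cases hiv : i = v₂
        · exact ⟨Sum.inr (Sum.inr 0), hiv.symm⟩
        · exact ⟨Sum.inl (Sum.inr ⟨i, Finset.mem_erase.mpr ⟨hiv, h⟩⟩), rfl⟩
    have hcard : Fintype.card ((↥(I₁.erase v₁) ⊕ ↥(I₂.erase v₂)) ⊕ (Fin 1 ⊕ Fin 1)) =
        Fintype.card I := by
      have hp₁ : 0 < I₁.card := Finset.card_pos.mpr ⟨v₁, hv₁⟩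
      have hp₂ : 0 < I₂.card := Finset.card_pos.mpr ⟨v₂, hv₂⟩
      have hcu : I₁.card + I₂.card = Fintype.card I := by
        rw [← Finset.card_union_of_disjoint hdisj, hunion, Finset.card_univ]
      simp only [Fintype.card_sum, Fintype.card_coe, Finset.card_erase_of_mem hv₁,
        Finset.card_erase_of_mem hv₂, Fintype.card_fin]
      omega
    have hbij : Function.Bijective f :=
      (Fintype.bijective_iff_surjective_and_card f).mpr ⟨hsurj, hcard⟩
    rw [← Matrix.det_submatrix_equiv_self (Equiv.ofBijective f hbij) M]
    have hsub : M.submatrix (Equiv.ofBijective f hbij) (Equiv.ofBijective f hbij) =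
        M.submatrix f f := rfl
    rw [hsub, hfdef, submatrix_elim, submatrix_elim, submatrix_elim, submatrix_elim,
      submatrix_elim, hz12, hz21, hzb, hzb', hzr, hzr']
    rw [show M.submatrix c₁ c₁ = A from rfl, show M.submatrix c₂ c₂ = D from rfl,
      show M.submatrix c₁ (fun _ : Fin 1 => v₁) = b₁ from rfl,
      show M.submatrix c₂ (fun _ : Fin 1 => v₂) = b₂ from rfl,
      show M.submatrix (fun _ : Fin 1 => v₁) c₁ = r₁ from rfl,
      show M.submatrix (fun _ : Fin 1 => v₂) c₂ = r₂ from rfl, ← hK]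
    rw [Matrix.det_fromBlocks₁₁, hinvK, Matrix.fromBlocks_multiply,
      Matrix.fromBlocks_multiply]
    simp only [Matrix.mul_zero, Matrix.zero_mul, add_zero, zero_add]
    rw [fromBlocks_sub', det_fromBlocks_one_one]
    have hdetK : K.det = A.det * D.det := by
      rw [hK]; exact Matrix.det_fromBlocks_zero₂₁ _ _ _
    rw [hdetK]
    congr 1
    have e1 : (M.submatrix (fun _ : Fin 1 => v₁) (fun _ : Fin 1 => v₁) - r₁ * ⅟A * b₁) 0 0 =
        M v₁ v₁ - s₁ := rfl
    have e2 : (M.submatrix (fun _ : Fin 1 => v₂) (fun _ : Fin 1 => v₂) - r₂ * ⅟D * b₂) 0 0 =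
        M v₂ v₂ - s₂ := rfl
    have e3 : (M.submatrix (fun _ : Fin 1 => v₁) (fun _ : Fin 1 => v₂) -
        (0 : Matrix (Fin 1) (Fin 1) ℝ)) 0 0 = -a := by
      simp [Matrix.sub_apply, Matrix.submatrix_apply, hedge]
    have e4 : (M.submatrix (fun _ : Fin 1 => v₂) (fun _ : Fin 1 => v₁) -
        (0 : Matrix (Fin 1) (Fin 1) ℝ)) 0 0 = -a := by
      simp only [Matrix.sub_apply, Matrix.submatrix_apply, Matrix.zero_apply, sub_zero]
      rw [hsy v₂ v₁, hedge]
    rw [e1, e2, e3, e4]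
  rw [eq4, eq3, eq1, eq2]
  field_simp
end

section
/- Let M be a real symmetric n×n positive definite matrix with M[i,i] = 1 for all i, and such that each off-diagonal entry M[i,j] (i ≠ j) is either 0 or satisfies M[i,j] ≤ −1/2. Then the graph G on vertex set {1,…,n} with edges {i,j} whenever M[i,j] ≠ 0 is acyclic, i.e., contains no cycle. -/
/-!
Let `S` be the vertex set of a cycle and `𝟙_S` its indicator vector. Every vertex `i` of the
cycle has two distinct neighbours on it, each contributing at most `-1/2` to the row sum
`∑ j ∈ S, M i j`, while all other off-diagonal entries are `≤ 0`; so each such row sum is at most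
`1 - 1/2 - 1/2 = 0`, and `𝟙_Sᵀ M 𝟙_S ≤ 0` contradicts positive definiteness.
-/

open Finset Matrix

lemma Matrix.PosDef.sum_sum_pos {ι R : Type*} [Fintype ι] [Ring R] [PartialOrder R] [StarRing R]
    [Nontrivial R] {M : Matrix ι ι R} (hM : M.PosDef)
    {S : Finset ι} (hS : S.Nonempty) : 0 < ∑ i ∈ S, ∑ j ∈ S, M i j := by
  classical
  set x : ι → R := fun i => if i ∈ S then 1 else 0
  obtain ⟨v, hv⟩ := hS
  have hx : x ≠ 0 := fun h => by simpa [x, hv] using congrFun h v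
  have hquad : star x ⬝ᵥ M *ᵥ x = ∑ i ∈ S, ∑ j ∈ S, M i j := by
    simp [x, mulVec, dotProduct, sum_ite_mem, apply_ite star]
  exact hquad ▸ hM.dotProduct_mulVec_pos hx

lemma SimpleGraph.Walk.IsCycle.exists_adj_ne_of_mem_support {V : Type*} {G : SimpleGraph V}
    {u v : V} {p : G.Walk u u} (hp : p.IsCycle) (hv : v ∈ p.support) :
    ∃ a b, a ≠ b ∧ G.Adj v a ∧ G.Adj v b ∧ a ∈ p.support ∧ b ∈ p.support := by
  obtain ⟨a, b, hab, hnbr⟩ := Set.ncard_eq_two.mp (hp.ncard_neighborSet_toSubgraph_eq_two hv)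
  have ha : p.toSubgraph.Adj v a := by simp [← SimpleGraph.Subgraph.mem_neighborSet, hnbr]
  have hb : p.toSubgraph.Adj v b := by simp [← SimpleGraph.Subgraph.mem_neighborSet, hnbr]
  exact ⟨a, b, hab, ha.adj_sub, hb.adj_sub, p.mem_verts_toSubgraph.mp ha.snd_mem,
    p.mem_verts_toSubgraph.mp hb.snd_mem⟩

lemma Finset.sum_le_add_add_of_nonpos {ι N : Type*} [DecidableEq ι] [AddCommMonoid N]
    [Preorder N] [AddLeftMono N] {S : Finset ι} {f : ι → N}
    {i a b : ι} (hi : i ∈ S) (ha : a ∈ S) (hb : b ∈ S) (hia : i ≠ a) (hib : i ≠ b) (hab : a ≠ b)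
    (hf : ∀ j ∈ S, j ≠ i → j ≠ a → j ≠ b → f j ≤ 0) :
    ∑ j ∈ S, f j ≤ f i + f a + f b := by
  calc ∑ j ∈ S, f j ≤ ∑ j ∈ {i, a, b}, f j :=
        sum_le_sum_of_subset_of_nonpos' (by simp [insert_subset_iff, hi, ha, hb])
          (by simpa using hf)
    _ = f i + f a + f b := by simp [hia, hib, hab, add_assoc]

theorem graph_of_posDef_gram_isAcyclic {n : ℕ} (M : Matrix (Fin n) (Fin n) ℝ)
    (hM : M.PosDef) (hdiag : ∀ i, M i i = 1)
    (hoff : ∀ i j, i ≠ j → M i j = 0 ∨ M i j ≤ -(1 / 2))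
    (G : SimpleGraph (Fin n))
    (hG : ∀ i j, G.Adj i j ↔ i ≠ j ∧ M i j ≠ 0) :
    G.IsAcyclic := by
  intro v p hp
  set S := p.support.toFinset
  have hedge : ∀ i j, G.Adj i j → M i j ≤ -(1 / 2) := fun i j hij =>
    (hoff i j ((hG i j).1 hij).1).resolve_left ((hG i j).1 hij).2
  have hrow : ∀ i ∈ S, ∑ j ∈ S, M i j ≤ 0 := by
    intro i hi
    rw [List.mem_toFinset] at hi
    obtain ⟨a, b, hab, hia, hib, ha, hb⟩ := hp.exists_adj_ne_of_mem_support hi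
    calc ∑ j ∈ S, M i j ≤ M i i + M i a + M i b :=
          sum_le_add_add_of_nonpos (List.mem_toFinset.2 hi) (List.mem_toFinset.2 ha)
            (List.mem_toFinset.2 hb) hia.ne hib.ne hab fun j _ hji _ _ => by
              rcases hoff i j (Ne.symm hji) with h | h <;> linarith
      _ ≤ 0 := by linarith [hdiag i, hedge i a hia, hedge i b hib]
  exact (hM.sum_sum_pos ⟨v, List.mem_toFinset.2 p.start_mem_support⟩).not_ge (sum_nonpos hrow)
end

section
/- Let M be a real symmetric n×n positive definite matrix with M[i,i] = 1 for all i, and such that each off-diagonal entry M[i,j] (i ≠ j) is either 0 or at most −1/2. Then the number of unordered pairs {i,j} with i ≠ j and M[i,j] ≠ 0 is at most n − 1. -/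
/-!
At the all-ones vector the quadratic form of `M` is `∑ i, ∑ j, M i j`, which is positive.
The diagonal contributes `n`; every edge `{i, j}` of the graph of nonzero off-diagonal entries
contributes `M i j + M j i ≤ -1`, and the remaining off-diagonal entries vanish. Hence the graph
has fewer than `n` edges, and its edges are exactly the pairs being counted.
-/
open Finset

theorem Sym2.toFinset_injective {α : Type*} [DecidableEq α] :
    Function.Injective (Sym2.toFinset : Sym2 α → Finset α) := fun z w h =>
  Sym2.ext fun a => by rw [← Sym2.mem_toFinset, h, Sym2.mem_toFinset]

namespace SimpleGraph

variable {V : Type*} (G : SimpleGraph V)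

theorem ncard_setOf_isNClique_two [DecidableEq V] [Fintype G.edgeSet] :
    {s : Finset V | G.IsNClique 2 s}.ncard = #G.edgeFinset := by
  have himage : {s : Finset V | G.IsNClique 2 s} = Sym2.toFinset '' G.edgeSet := by
    ext s
    constructor
    · rintro ⟨hclique, hcard⟩
      obtain ⟨a, b, hab, rfl⟩ := card_eq_two.mp hcard
      exact ⟨s(a, b), hclique (by simp) (by simp) hab, Sym2.toFinset_mk_eq⟩
    · rintro ⟨e, he, rfl⟩
      induction e using Sym2.ind with
      | h a b => simpa [Sym2.toFinset_mk_eq, isNClique_iff, isClique_pair, G.ne_of_adj he] using he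
  rw [himage, Set.ncard_image_of_injective _ Sym2.toFinset_injective, ← coe_edgeFinset,
    Set.ncard_coe_finset]

end SimpleGraph

namespace Matrix

variable {ι R : Type*} [Fintype ι]

theorem PosDef.sum_sum_pos_s12 [Nonempty ι] [Ring R] [PartialOrder R] [StarRing R] [Nontrivial R]
    {M : Matrix ι ι R} (hM : M.PosDef) : 0 < ∑ i, ∑ j, M i j := by
  have hone : (fun _ => 1 : ι → R) ≠ 0 :=
    Function.ne_iff.mpr ⟨Classical.arbitrary ι, one_ne_zero⟩
  simpa [dotProduct, mulVec, Finset.sum_comm] using hM.dotProduct_mulVec_pos hone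

theorem sum_sum_le_trace_sub_of_adj [CommRing R] [PartialOrder R] [IsOrderedRing R]
    (M : Matrix ι ι R) (G : SimpleGraph ι) [DecidableRel G.Adj] {c : R}
    (hoff : ∀ i j, i ≠ j → M i j ≤ 0) (hadj : ∀ i j, G.Adj i j → M i j ≤ -c) :
    ∑ i, ∑ j, M i j ≤ M.trace - 2 * c * #G.edgeFinset := by
  classical
  have hrow : ∀ i, ∑ j, M i j ≤ M i i - c * G.degree i := fun i => calc
    ∑ j, M i j = M i i + ∑ j ∈ univ.erase i, M i j := (add_sum_erase _ _ (mem_univ i)).symm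
    _ ≤ M i i + ∑ j ∈ G.neighborFinset i, M i j := by
      refine add_le_add_right (sum_le_sum_of_subset_of_nonpos' (fun j hj => ?_)
        fun j hj _ => hoff i j (ne_of_mem_erase hj).symm) _
      exact mem_erase.mpr ⟨(G.ne_of_adj ((G.mem_neighborFinset i j).mp hj)).symm, mem_univ j⟩
    _ ≤ M i i + ∑ j ∈ G.neighborFinset i, -c := by
      gcongr with j hj
      exact hadj i j ((G.mem_neighborFinset i j).mp hj)
    _ = M i i - c * G.degree i := by simp [G.card_neighborFinset_eq_degree]; ring
  calc ∑ i, ∑ j, M i j ≤ ∑ i, (M i i - c * G.degree i) := sum_le_sum fun i _ => hrow i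
    _ = M.trace - 2 * c * #G.edgeFinset := by
      rw [sum_sub_distrib, ← mul_sum, ← Nat.cast_sum, G.sum_degrees_eq_twice_card_edges]
      simp [trace]; ring

theorem PosDef.card_edgeFinset_lt_card [Nonempty ι] [Field R] [LinearOrder R]
    [IsStrictOrderedRing R] [StarRing R] {M : Matrix ι ι R} (hM : M.PosDef)
    (G : SimpleGraph ι) [DecidableRel G.Adj] (hdiag : ∀ i, M i i = 1)
    (hoff : ∀ i j, i ≠ j → M i j ≤ 0) (hadj : ∀ i j, G.Adj i j → M i j ≤ -(1 / 2)) :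
    #G.edgeFinset < Fintype.card ι := by
  have htrace : M.trace = Fintype.card ι := by simp [trace, hdiag]
  have hpos := hM.sum_sum_pos_s12
  have hle := M.sum_sum_le_trace_sub_of_adj G hoff hadj
  have : (#G.edgeFinset : R) < Fintype.card ι := by linarith
  exact_mod_cast this

end Matrix

theorem card_edges_le_of_posDef_gram {n : ℕ} (M : Matrix (Fin n) (Fin n) ℝ)
    (hM : M.PosDef) (hdiag : ∀ i, M i i = 1)
    (hoff : ∀ i j, i ≠ j → M i j = 0 ∨ M i j ≤ -(1 / 2)) :
    {s : Finset (Fin n) | s.card = 2 ∧ ∀ i ∈ s, ∀ j ∈ s, i ≠ j → M i j ≠ 0}.ncard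
      ≤ n - 1 := by
  classical
  have hsymm : ∀ i j, M j i = M i j := fun i j => by simpa using hM.isHermitian.apply i j
  let G := SimpleGraph.fromRel fun i j => M i j ≠ 0
  have hnonpos : ∀ i j, i ≠ j → M i j ≤ 0 := fun i j hij =>
    (hoff i j hij).elim le_of_eq fun h => h.trans (by norm_num)
  have hadj : ∀ i j, G.Adj i j → M i j ≤ -(1 / 2) := by
    rintro i j ⟨hij, hne⟩
    exact (hoff i j hij).resolve_left (hne.elim id fun h => hsymm i j ▸ h)
  have hcliques :
      {s : Finset (Fin n) | s.card = 2 ∧ ∀ i ∈ s, ∀ j ∈ s, i ≠ j → M i j ≠ 0} ⊆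
        {s | G.IsNClique 2 s} := fun s ⟨hcard, hs⟩ =>
    ⟨fun i hi j hj hij => ⟨hij, Or.inl (hs i hi j hj hij)⟩, hcard⟩
  calc _ ≤ {s | G.IsNClique 2 s}.ncard := Set.ncard_le_ncard hcliques
    _ = #G.edgeFinset := G.ncard_setOf_isNClique_two
    _ ≤ n - 1 := by
      rcases n.eq_zero_or_pos with rfl | hn
      · simpa using G.card_edgeFinset_le_card_choose_two
      · have : Nonempty (Fin n) := ⟨⟨0, hn⟩⟩
        have := hM.card_edgeFinset_lt_card G hdiag hnonpos hadj
        rw [Fintype.card_fin] at this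
        omega
end

section
/- Let p, q, r be integers ≥ 2 with 1/p + 1/q + 1/r < 1, and set a = cos(π/p), b = cos(π/q), c = cos(π/r). Then 1 − a² − b² − c² − 2abc < 0, i.e., the Gram matrix [[1,−a,−b],[−a,1,−c],[−b,−c,1]] of the hyperbolic (Lannér) triangle has negative determinant. -/
theorem lanner_triangle_det_neg (p q r : ℕ) (hp : 2 ≤ p) (hq : 2 ≤ q) (hr : 2 ≤ r)
    (h : 1 / (p : ℝ) + 1 / (q : ℝ) + 1 / (r : ℝ) < 1) :
    1 - Real.cos (Real.pi / p) ^ 2 - Real.cos (Real.pi / q) ^ 2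
        - Real.cos (Real.pi / r) ^ 2
        - 2 * Real.cos (Real.pi / p) * Real.cos (Real.pi / q) * Real.cos (Real.pi / r)
      < 0 := by
  have hπ := Real.pi_pos
  have hp1 : (1:ℝ) ≤ p := by exact_mod_cast Nat.one_le_of_lt hp
  have hq1 : (1:ℝ) ≤ q := by exact_mod_cast Nat.one_le_of_lt hq
  have hr1 : (1:ℝ) ≤ r := by exact_mod_cast Nat.one_le_of_lt hr
  set A := Real.pi / p with hA
  set B := Real.pi / q with hB
  set C := Real.pi / r with hC
  have hA0 : 0 < A := div_pos hπ (by linarith)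
  have hB0 : 0 < B := div_pos hπ (by linarith)
  have hC0 : 0 < C := div_pos hπ (by linarith)
  have hsum : A + B + C < Real.pi := by
    have h1 : A + B + C = Real.pi * (1 / p + 1 / q + 1 / r) := by
      rw [hA, hB, hC]; ring
    rw [h1]
    calc Real.pi * (1 / (p:ℝ) + 1 / q + 1 / r) < Real.pi * 1 :=
          mul_lt_mul_of_pos_left h hπ
      _ = Real.pi := mul_one _
  have hkey : Real.cos (Real.pi - (A + B)) < Real.cos C :=
    Real.cos_lt_cos_of_nonneg_of_le_pi hC0.le (by linarith) (by linarith)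
  rw [Real.cos_pi_sub, Real.cos_add] at hkey
  have hsA : 0 ≤ Real.sin A := Real.sin_nonneg_of_nonneg_of_le_pi hA0.le
    (by rw [hA]; exact div_le_self hπ.le hp1)
  have hsB : 0 ≤ Real.sin B := Real.sin_nonneg_of_nonneg_of_le_pi hB0.le
    (by rw [hB]; exact div_le_self hπ.le hq1)
  have h2 : Real.sin A ^ 2 = 1 - Real.cos A ^ 2 := Real.sin_sq A
  have h3 : Real.sin B ^ 2 = 1 - Real.cos B ^ 2 := Real.sin_sq B
  nlinarith [mul_nonneg hsA hsB, hkey, h2, h3,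
    mul_pos (show (0:ℝ) < Real.cos C + Real.cos A * Real.cos B - Real.sin A * Real.sin B by
      nlinarith) (show (0:ℝ) < Real.cos C + Real.cos A * Real.cos B + Real.sin A * Real.sin B by
      nlinarith [mul_nonneg hsA hsB])]
end

section
/- Let p, q, r be integers ≥ 2 with 1/p + 1/q + 1/r > 1, and set a = cos(π/p), b = cos(π/q), c = cos(π/r). Then 1 − a² − b² − c² − 2abc > 0, i.e., the Gram matrix [[1,−a,−b],[−a,1,−c],[−b,−c,1]] of the spherical (elliptic) triangle has positive determinant. -/
theorem elliptic_triangle_det_pos (p q r : ℕ) (hp : 2 ≤ p) (hq : 2 ≤ q) (hr : 2 ≤ r)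
    (h : 1 < 1 / (p : ℝ) + 1 / (q : ℝ) + 1 / (r : ℝ)) :
    0 < 1 - Real.cos (Real.pi / p) ^ 2 - Real.cos (Real.pi / q) ^ 2
        - Real.cos (Real.pi / r) ^ 2
        - 2 * Real.cos (Real.pi / p) * Real.cos (Real.pi / q) * Real.cos (Real.pi / r) := by
  have hπ := Real.pi_pos
  have hp0 : (0:ℝ) < p := by exact_mod_cast Nat.lt_of_lt_of_le (by norm_num) hp
  have hq0 : (0:ℝ) < q := by exact_mod_cast Nat.lt_of_lt_of_le (by norm_num) hq
  have hr0 : (0:ℝ) < r := by exact_mod_cast Nat.lt_of_lt_of_le (by norm_num) hr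
  have hp2 : (2:ℝ) ≤ p := by exact_mod_cast hp
  have hq2 : (2:ℝ) ≤ q := by exact_mod_cast hq
  have hr2 : (2:ℝ) ≤ r := by exact_mod_cast hr
  set A := Real.pi / p with hA
  set B := Real.pi / q with hB
  set C := Real.pi / r with hC
  have hA0 : 0 < A := div_pos hπ hp0
  have hB0 : 0 < B := div_pos hπ hq0
  have hC0 : 0 < C := div_pos hπ hr0
  have hA2 : A ≤ Real.pi / 2 := by rw [hA]; gcongr
  have hB2 : B ≤ Real.pi / 2 := by rw [hB]; gcongr
  have hC2 : C ≤ Real.pi / 2 := by rw [hC]; gcongr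
  have hsum : Real.pi < A + B + C := by
    have h' := mul_lt_mul_of_pos_left h hπ
    rw [mul_one] at h'
    calc Real.pi < Real.pi * (1 / p + 1 / q + 1 / r) := h'
      _ = A + B + C := by rw [hA, hB, hC]; ring
  set a := Real.cos A
  set b := Real.cos B
  set c := Real.cos C
  -- first factor: cos C < -cos (A+B)
  have h1 : c < Real.sin A * Real.sin B - a * b := by
    have hx : (0:ℝ) ≤ Real.pi - (A + B) := by linarith
    have hy : C ≤ Real.pi := by linarith
    have hxy : Real.pi - (A + B) < C := by linarith
    have := Real.cos_lt_cos_of_nonneg_of_le_pi hx hy hxy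
    rw [Real.cos_pi_sub, Real.cos_add] at this
    linarith
  -- second factor
  have hcC : 0 ≤ c := Real.cos_nonneg_of_mem_Icc ⟨by linarith, hC2⟩
  have hcAB : 0 < Real.cos (A - B) :=
    Real.cos_pos_of_mem_Ioo ⟨by linarith, by linarith⟩
  rw [Real.cos_sub] at hcAB
  have h2 : 0 < c + (a * b + Real.sin A * Real.sin B) := by linarith
  have h1' : 0 < Real.sin A * Real.sin B - a * b - c := by linarith
  have hsa : Real.sin A ^ 2 = 1 - a ^ 2 := by
    have := Real.sin_sq_add_cos_sq A; linarith
  have hsb : Real.sin B ^ 2 = 1 - b ^ 2 := by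
    have := Real.sin_sq_add_cos_sq B; linarith
  have key : 1 - a ^ 2 - b ^ 2 - c ^ 2 - 2 * a * b * c
      = (Real.sin A * Real.sin B - a * b - c) * (c + (a * b + Real.sin A * Real.sin B)) := by
    nlinarith [hsa, hsb, sq_nonneg (Real.sin A * Real.sin B)]
  rw [key]
  exact mul_pos h1' h2
end
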